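/- Let X be a compact Hausdorff space, ∗ a continuous t-norm, and ψ : X → [0,1] continuous. Then the map l^ψ : MX → [0,1] defined by l^ψ(ν) = ∫^{∨∗} ψ dν = max{ν(ψ⁻¹([t,1])) ∗ t : t ∈ [0,1]} is continuous, where MX carries the topology generated by the sets {ν : ν(F) < a} for F closed and {ν : ν(U) > a} for U open. -/

import Mathlib

open Set

/-- A continuous triangular norm on `[0,1]`, modeled as a binary operation on `ℝ`
restricted to the unit interval. -/
structure Tnorm where
  op : ℝ → ℝ → ℝ
  mem' : ∀ a b : ℝ, a ∈ Set.Icc (0:ℝ) 1 → b ∈ Set.Icc (0:ℝ) 1 → op a b ∈ Set.Icc (0:ℝ) 1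
  comm' : ∀ a b : ℝ, op a b = op b a
  assoc' : ∀ a b c : ℝ, op (op a b) c = op a (op b c)
  mono' : ∀ a b c d : ℝ, a ≤ b → c ≤ d → op a c ≤ op b d
  one_id' : ∀ a ∈ Set.Icc (0:ℝ) 1, op a 1 = a
  cont' : Continuous fun p : ℝ × ℝ => op p.1 p.2

/-- An upper-semicontinuous capacity on a topological space `X`. -/
structure Capacity (X : Type*) [TopologicalSpace X] where
  toFun : Set X → ℝ
  nonneg' : ∀ A : Set X, 0 ≤ toFun A
  le_one' : ∀ A : Set X, toFun A ≤ 1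
  empty' : toFun (∅ : Set X) = 0
  univ' : toFun (Set.univ : Set X) = 1
  mono' : ∀ A B : Set X, A ⊆ B → toFun A ≤ toFun B
  usc' : ∀ F : Set X, IsClosed F → ∀ a : ℝ, toFun F < a →
    ∃ O : Set X, IsOpen O ∧ F ⊆ O ∧ ∀ B : Set X, B ⊆ O → IsCompact B → toFun B < a

/-- Two functions are comonotone (equiordered). -/
def Comonotone {X : Type*} (φ ψ : X → ℝ) : Prop :=
  ∀ x₁ x₂ : X, 0 ≤ (φ x₁ - φ x₂) * (ψ x₁ - ψ x₂)

/-- The t-normed integral `∫^{∨∗} f dν = sup { ν(f⁻¹[t,1]) ∗ t : t ∈ [0,1] }`. -/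
noncomputable def tInt {X : Type*} [TopologicalSpace X] (T : Tnorm) (ν : Capacity X)
    (f : X → ℝ) : ℝ :=
  sSup ((fun t : ℝ => T.op (ν.toFun (f ⁻¹' Set.Icc t 1)) t) '' Set.Icc (0:ℝ) 1)

/-- Extension of a capacity to (open) sets: `ν(U) = sup{ν(K) : K closed, K ⊆ U}`. -/
noncomputable def capOpen {X : Type*} [TopologicalSpace X] (ν : Capacity X) (U : Set X) : ℝ :=
  sSup (ν.toFun '' {K : Set X | IsClosed K ∧ K ⊆ U})

/-- The topology on the space of capacities, generated by the subbasis
`O₋(F,a) = {ν : ν(F) < a}` (`F` closed) and `O₊(U,a) = {ν : ν(U) > a}` (`U` open). -/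
instance capacityTop (X : Type*) [TopologicalSpace X] : TopologicalSpace (Capacity X) :=
  TopologicalSpace.generateFrom
    {S : Set (Capacity X) |
      (∃ F : Set X, ∃ a : ℝ, IsClosed F ∧ S = {ν : Capacity X | ν.toFun F < a}) ∨
      (∃ U : Set X, ∃ a : ℝ, IsOpen U ∧ S = {ν : Capacity X | a < capOpen ν U})}

/-!
Lower semicontinuity: if `c < ν₀(ψ ≥ t) ∗ t`, lower both arguments by a small `δ`; the open set
`{ψ > t - δ}` has `ν₀`-capacity above `ν₀(ψ ≥ t) - δ`, which is a subbasic condition `O₊` on `ν`,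
and every such `ν` has `ν(ψ ≥ t - δ) ∗ (t - δ) > c`.

Upper semicontinuity: `(ν, t) ↦ ν(ψ ≥ t) ∗ t` is jointly upper semicontinuous, since by the
upper semicontinuity of `ν₀` and compactness of `X` a bound `ν₀(ψ ≥ t) < a` survives lowering the
level to some `s < t`, and `ν(ψ ≥ s) < a` is a subbasic condition `O₋`. A supremum over the
compact interval `[0, 1]` of a jointly upper semicontinuous function is upper semicontinuous.
-/

open Filter Topology

theorem UpperSemicontinuous.sSup_image_of_isCompact {α β γ : Type*} [TopologicalSpace α]
    [TopologicalSpace β] [ConditionallyCompleteLinearOrder γ] [DenselyOrdered γ]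
    {f : α → β → γ} (hf : UpperSemicontinuous (Function.uncurry f)) {K : Set β}
    (hK : IsCompact K) (hKne : K.Nonempty) :
    UpperSemicontinuous fun x => sSup (f x '' K) := by
  intro x₀ c hc
  have : Nonempty γ := ⟨f x₀ hKne.some⟩
  have hbdd (x : α) : BddAbove (f x '' K) :=
    ((hf.comp (Continuous.prodMk_right x)).upperSemicontinuousOn K).bddAbove_of_isCompact hK
  obtain ⟨b, hb, hbc⟩ := exists_between hc
  have hlt : ∀ y ∈ K, ∀ᶠ z : α × β in 𝓝 (x₀, y), f z.1 z.2 < b := fun y hy =>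
    hf (x₀, y) b ((le_csSup (hbdd x₀) (mem_image_of_mem _ hy)).trans_lt hb)
  filter_upwards [hK.eventually_forall_of_forall_eventually (P := fun x y => f x y < b) hlt]
    with x hx
  exact (csSup_le (hKne.image _) (forall_mem_image.2 fun y hy => (hx y hy).le)).trans_lt hbc

theorem exists_lt_preimage_Icc_subset {X : Type*} [TopologicalSpace X] [CompactSpace X]
    {ψ : X → ℝ} (hψ : Continuous ψ) {O : Set X} (hO : IsOpen O) {t u : ℝ}
    (h : ψ ⁻¹' Icc t u ⊆ O) : ∃ s < t, ψ ⁻¹' Icc s u ⊆ O := by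
  have hC : IsCompact (Oᶜ ∩ ψ ⁻¹' Iic u) :=
    (hO.isClosed_compl.inter (isClosed_Iic.preimage hψ)).isCompact
  -- `ψ < t` on the compact set `Oᶜ ∩ {ψ ≤ u}`, so it is bounded there by some `a < t`
  obtain ⟨a, hat, ha⟩ : ∃ a < t, ∀ x ∈ Oᶜ ∩ ψ ⁻¹' Iic u, ψ x ≤ a :=
    hC.exists_forall_le' (α := ℝᵒᵈ) hψ.continuousOn
      fun x hx => lt_of_not_ge fun hxt => hx.1 (h ⟨hxt, hx.2⟩)
  obtain ⟨s, has, hst⟩ := exists_between hat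
  exact ⟨s, hst, fun x hx => by_contra fun hxO => (ha x ⟨hxO, hx.2⟩).not_gt (has.trans_le hx.1)⟩

namespace Tnorm

theorem exists_pos_lt_op_sub (T : Tnorm) {c r t : ℝ} (h : c < T.op r t) :
    ∃ δ > 0, c < T.op (r - δ) (t - δ) := by
  have hcont : Continuous fun δ : ℝ => T.op (r - δ) (t - δ) := by
    have := T.cont'; fun_prop
  have hev : ∀ᶠ δ in 𝓝[>] 0, c < T.op (r - δ) (t - δ) :=
    nhdsWithin_le_nhds ((hcont.tendsto 0).eventually_const_lt (by simpa using h))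
  exact (hev.and self_mem_nhdsWithin).exists.imp fun δ h => ⟨h.2, h.1⟩

theorem exists_pos_op_add_lt (T : Tnorm) {b r t : ℝ} (h : T.op r t < b) :
    ∃ δ > 0, T.op (r + δ) (t + δ) < b := by
  have hcont : Continuous fun δ : ℝ => T.op (r + δ) (t + δ) := by
    have := T.cont'; fun_prop
  have hev : ∀ᶠ δ in 𝓝[>] 0, T.op (r + δ) (t + δ) < b :=
    nhdsWithin_le_nhds ((hcont.tendsto 0).eventually_lt_const (by simpa using h))
  exact (hev.and self_mem_nhdsWithin).exists.imp fun δ h => ⟨h.2, h.1⟩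

end Tnorm

namespace Capacity

variable {X : Type*} [TopologicalSpace X]

theorem isOpen_setOf_toFun_lt {F : Set X} (hF : IsClosed F) (a : ℝ) :
    IsOpen {ν : Capacity X | ν.toFun F < a} :=
  TopologicalSpace.isOpen_generateFrom_of_mem (Or.inl ⟨F, a, hF, rfl⟩)

theorem isOpen_setOf_lt_capOpen {U : Set X} (hU : IsOpen U) (a : ℝ) :
    IsOpen {ν : Capacity X | a < capOpen ν U} :=
  TopologicalSpace.isOpen_generateFrom_of_mem (Or.inr ⟨U, a, hU, rfl⟩)

theorem toFun_le_capOpen (ν : Capacity X) {K U : Set X} (hK : IsClosed K) (hKU : K ⊆ U) :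
    ν.toFun K ≤ capOpen ν U :=
  le_csSup ⟨1, forall_mem_image.2 fun L _ => ν.le_one' L⟩ ⟨K, ⟨hK, hKU⟩, rfl⟩

theorem capOpen_le_toFun (ν : Capacity X) (U : Set X) : capOpen ν U ≤ ν.toFun U :=
  csSup_le ⟨_, ⟨∅, ⟨isClosed_empty, empty_subset U⟩, rfl⟩⟩
    (forall_mem_image.2 fun _ hK => ν.mono' _ _ hK.2)

theorem exists_lt_toFun_preimage_Icc_lt [CompactSpace X] (ν : Capacity X) {ψ : X → ℝ}
    (hψ : Continuous ψ) {t u a : ℝ} (h : ν.toFun (ψ ⁻¹' Icc t u) < a) :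
    ∃ s < t, ν.toFun (ψ ⁻¹' Icc s u) < a := by
  obtain ⟨O, hO, hFO, hOa⟩ := ν.usc' _ (isClosed_Icc.preimage hψ) a h
  obtain ⟨s, hst, hsO⟩ := exists_lt_preimage_Icc_subset hψ hO hFO
  exact ⟨s, hst, hOa _ hsO (isClosed_Icc.preimage hψ).isCompact⟩

end Capacity

section tInt

variable {X : Type*} [TopologicalSpace X]

theorem tInt_bddAbove (T : Tnorm) (ν : Capacity X) (ψ : X → ℝ) :
    BddAbove ((fun t : ℝ => T.op (ν.toFun (ψ ⁻¹' Icc t 1)) t) '' Icc (0:ℝ) 1) :=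
  ⟨1, forall_mem_image.2 fun _ ht => (T.mem' _ _ ⟨ν.nonneg' _, ν.le_one' _⟩ ht).2⟩

theorem le_tInt (T : Tnorm) (ν : Capacity X) (ψ : X → ℝ) {t : ℝ} (ht : t ∈ Icc (0:ℝ) 1) :
    T.op (ν.toFun (ψ ⁻¹' Icc t 1)) t ≤ tInt T ν ψ :=
  le_csSup (tInt_bddAbove T ν ψ) ⟨t, ht, rfl⟩

theorem upperSemicontinuous_op_toFun_preimage_Icc [CompactSpace X] (T : Tnorm) {ψ : X → ℝ}
    (hψ : Continuous ψ) :
    UpperSemicontinuous fun p : Capacity X × ℝ => T.op (p.1.toFun (ψ ⁻¹' Icc p.2 1)) p.2 := by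
  rintro ⟨ν₀, t⟩ b hb
  set r := ν₀.toFun (ψ ⁻¹' Icc t 1)
  obtain ⟨δ, hδ, hrδ⟩ := T.exists_pos_op_add_lt hb
  obtain ⟨s, hst, hs⟩ := ν₀.exists_lt_toFun_preimage_Icc_lt hψ (lt_add_of_pos_right r hδ)
  have hν : ∀ᶠ ν in 𝓝 ν₀, ν.toFun (ψ ⁻¹' Icc s 1) < r + δ :=
    (Capacity.isOpen_setOf_toFun_lt (isClosed_Icc.preimage hψ) _).mem_nhds hs
  have ht : ∀ᶠ t' in 𝓝 t, t' ∈ Ioo s (t + δ) := Ioo_mem_nhds hst (lt_add_of_pos_right t hδ)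
  filter_upwards [hν.prodMk_nhds ht] with ⟨ν, t'⟩ ⟨hνs, hst'⟩
  calc T.op (ν.toFun (ψ ⁻¹' Icc t' 1)) t'
      ≤ T.op (r + δ) (t + δ) :=
        T.mono' _ _ _ _ ((ν.mono' _ _ (preimage_mono (Icc_subset_Icc_left hst'.1.le))).trans
          hνs.le) hst'.2.le
    _ < b := hrδ

theorem upperSemicontinuous_tInt [CompactSpace X] (T : Tnorm) {ψ : X → ℝ} (hψ : Continuous ψ) :
    UpperSemicontinuous fun ν : Capacity X => tInt T ν ψ :=
  (upperSemicontinuous_op_toFun_preimage_Icc T hψ).sSup_image_of_isCompact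
    (f := fun (ν : Capacity X) t => T.op (ν.toFun (ψ ⁻¹' Icc t 1)) t) isCompact_Icc
    (nonempty_Icc.2 zero_le_one)

theorem lowerSemicontinuous_tInt (T : Tnorm) {ψ : X → ℝ} (hψ : Continuous ψ)
    (hψ01 : ∀ x, ψ x ∈ Icc (0:ℝ) 1) :
    LowerSemicontinuous fun ν : Capacity X => tInt T ν ψ := by
  intro ν₀ c hc
  obtain ⟨_, ⟨t, ht, rfl⟩, hct⟩ := exists_lt_of_lt_csSup ((nonempty_Icc.2 zero_le_one).image _) hc
  set r := ν₀.toFun (ψ ⁻¹' Icc t 1)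
  obtain ⟨δ, hδ, hcδ⟩ := T.exists_pos_lt_op_sub hct
  have hr : r - δ < capOpen ν₀ (ψ ⁻¹' Ioi (t - δ)) :=
    (sub_lt_self r hδ).trans_le (ν₀.toFun_le_capOpen (isClosed_Icc.preimage hψ)
      fun x hx => (sub_lt_self t hδ).trans_le hx.1)
  filter_upwards [(Capacity.isOpen_setOf_lt_capOpen (isOpen_Ioi.preimage hψ) _).mem_nhds hr]
    with ν hν
  -- the level `t - δ` clamped into `[0, 1]`, harmless since `0 ≤ ψ`
  set s := max (t - δ) 0
  have hsub : ψ ⁻¹' Ioi (t - δ) ⊆ ψ ⁻¹' Icc s 1 :=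
    fun x hx => ⟨max_le (le_of_lt hx) (hψ01 x).1, (hψ01 x).2⟩
  calc c < T.op (r - δ) (t - δ) := hcδ
    _ ≤ T.op (ν.toFun (ψ ⁻¹' Icc s 1)) s :=
      T.mono' _ _ _ _ (hν.le.trans ((ν.capOpen_le_toFun _).trans (ν.mono' _ _ hsub)))
        (le_max_left _ _)
    _ ≤ tInt T ν ψ := le_tInt T ν ψ ⟨le_max_right _ _, max_le (by linarith [ht.2]) zero_le_one⟩

end tInt

theorem tInt_continuous_in_capacity_general {X : Type*} [TopologicalSpace X] [CompactSpace X]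
    (T : Tnorm) (ψ : X → ℝ) (hψc : Continuous ψ)
    (hψr : ∀ x, ψ x ∈ Set.Icc (0:ℝ) 1) :
    Continuous fun ν : Capacity X => tInt T ν ψ :=
  continuous_iff_lower_upperSemicontinuous.2
    ⟨lowerSemicontinuous_tInt T hψc hψr, upperSemicontinuous_tInt T hψc⟩

/-- The map `ν ↦ ∫^{∨∗} ψ dν` is continuous on the space of capacities. -/
theorem tInt_continuous_in_capacity {X : Type*} [TopologicalSpace X] [CompactSpace X]
    [T2Space X] (T : Tnorm) (ψ : X → ℝ) (hψc : Continuous ψ)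
    (hψr : ∀ x, ψ x ∈ Set.Icc (0:ℝ) 1) :
    Continuous fun ν : Capacity X => tInt T ν ψ :=
  tInt_continuous_in_capacity_general T ψ hψc hψr
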